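/- The autarkies of a CNF formula F form a monoid under composition: composition of autarkies is associative on the induced total override operations, the empty assignment is the identity, and the set of autarkies is closed under composition. -/

import Mathlib

/-- Variables are natural numbers. -/
abbrev Var := Nat
/-- A literal is a variable with a polarity. -/
abbrev Lit := Var × Bool
/-- A clause is a set of literals. -/
abbrev Clause := Set Lit
/-- A CNF formula is a set of clauses. -/
abbrev CNF := Set Clause
/-- A partial assignment maps variables to optional Boolean values. -/
abbrev PAssign := Var → Option Bool

/-- φ touches C if some variable of C is in the domain of φ. -/
def touches (phi : PAssign) (C : Clause) : Prop := ∃ l ∈ C, phi l.1 ≠ none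
/-- φ satisfies C if some literal of C is made true by φ. -/
def psat (phi : PAssign) (C : Clause) : Prop := ∃ l ∈ C, phi l.1 = some l.2
/-- φ is an autarky for F: every clause of F touched by φ is satisfied by φ. -/
def Autarky (phi : PAssign) (F : CNF) : Prop := ∀ C ∈ F, touches phi C → psat phi C
/-- F[φ]: the clauses of F not satisfied by φ. -/
def reduce (F : CNF) (phi : PAssign) : CNF := {C ∈ F | ¬ psat phi C}
/-- A total assignment θ satisfies a clause. -/
def csat (theta : Var → Bool) (C : Clause) : Prop := ∃ l ∈ C, theta l.1 = l.2
/-- Satisfiability of a CNF. -/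
def Sat (F : CNF) : Prop := ∃ theta : Var → Bool, ∀ C ∈ F, csat theta C
/-- Composition ψ∘φ: agrees with ψ on dom ψ, with φ on dom φ \ dom ψ. -/
def comp (psi phi : PAssign) : PAssign := fun v => (psi v).elim (phi v) some
/-- The empty (trivial) partial assignment. -/
def emptyPA : PAssign := fun _ => none
/-- The variables occurring in F. -/
def varsOf (F : CNF) : Set Var := {v | ∃ C ∈ F, ∃ l ∈ C, l.1 = v}
/-- F is lean: every autarky for F is trivial on the variables of F. -/
def IsLean (F : CNF) : Prop := ∀ phi : PAssign, Autarky phi F → ∀ v ∈ varsOf F, phi v = none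
/-- The lean kernel: union of all lean subformulas. -/
def leanKernel (F : CNF) : CNF := ⋃₀ {G | G ⊆ F ∧ IsLean G}

/-! If ψ touches a clause of `F`, it satisfies it, and `comp ψ φ` extends ψ; otherwise `comp ψ φ`
agrees with φ on every variable of the clause, so the autarky condition for φ carries over. -/

section Composition

variable {phi psi : PAssign} {v : Var} {C : Clause}

theorem comp_apply_of_eq_some {b : Bool} (h : psi v = some b) : comp psi phi v = some b := by
  simp [comp, h]

theorem comp_apply_of_eq_none (h : psi v = none) : comp psi phi v = phi v := by
  simp [comp, h]

theorem psat.comp_left (h : psat psi C) : psat (comp psi phi) C :=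
  let ⟨l, hl, hsat⟩ := h
  ⟨l, hl, comp_apply_of_eq_some hsat⟩

theorem comp_apply_of_not_touches (h : ¬ touches psi C) {l : Lit} (hl : l ∈ C) :
    comp psi phi l.1 = phi l.1 :=
  comp_apply_of_eq_none (not_not.mp fun hne => h ⟨l, hl, hne⟩)

variable {theta : PAssign}

theorem touches_congr (h : ∀ l ∈ C, theta l.1 = phi l.1) : touches theta C ↔ touches phi C := by
  unfold touches
  exact exists_congr fun l => and_congr_right fun hl => by rw [h l hl]

theorem psat_congr (h : ∀ l ∈ C, theta l.1 = phi l.1) : psat theta C ↔ psat phi C := by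
  unfold psat
  exact exists_congr fun l => and_congr_right fun hl => by rw [h l hl]

theorem Autarky.comp {F : CNF} (hphi : Autarky phi F) (hpsi : Autarky psi F) :
    Autarky (comp psi phi) F := by
  intro C hC htouch
  by_cases hpsiC : touches psi C
  · exact (hpsi C hC hpsiC).comp_left
  · have hagree := fun l (hl : l ∈ C) => comp_apply_of_not_touches (phi := phi) hpsiC hl
    exact (psat_congr hagree).mpr (hphi C hC ((touches_congr hagree).mp htouch))

theorem comp_assoc (phi psi chi : PAssign) :
    comp chi (comp psi phi) = comp (comp chi psi) phi := by
  funext v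
  simp only [comp]
  cases chi v <;> cases psi v <;> rfl

theorem comp_emptyPA (phi : PAssign) : comp phi emptyPA = phi := by
  funext v
  cases h : phi v <;> simp [comp, emptyPA, h]

theorem emptyPA_comp (phi : PAssign) : comp emptyPA phi = phi :=
  rfl

end Composition

theorem autarky_emptyPA (F : CNF) : Autarky emptyPA F :=
  fun _ _ ⟨_, _, hne⟩ => absurd rfl hne

theorem autarky_monoid (F : CNF) :
    (∀ phi psi : PAssign, Autarky phi F → Autarky psi F → Autarky (comp psi phi) F) ∧
    (∀ phi psi chi : PAssign, comp chi (comp psi phi) = comp (comp chi psi) phi) ∧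
    (∀ phi : PAssign, comp phi emptyPA = phi ∧ comp emptyPA phi = phi) ∧
    Autarky emptyPA F :=
  ⟨fun _ _ hphi hpsi => hphi.comp hpsi, comp_assoc,
    fun phi => ⟨comp_emptyPA phi, emptyPA_comp phi⟩, autarky_emptyPA F⟩
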